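/- arXiv:2212.08678 — 3 statements merged into one kernel-verified Lean document; each statement's English description precedes it below -/
import Mathlib

section
/- Let b ∈ {0,1} and let u, v, L be integers with 0 ≤ u, 0 ≤ v, and u + v < L. Then: there exists q' ∈ {0,1} such that the four constraints u < v + (2−q'−b)·L, u > v − (1+q'−b)·L, u ≤ v + b·L, and u ≥ v − b·L all hold, if and only if (b = 1 ↔ u ≠ v). -/
theorem stmt_3 (b u v L : ℤ) (hb : b = 0 ∨ b = 1) (hu : 0 ≤ u) (hv : 0 ≤ v)
    (hL : u + v < L) :
    (∃ q' : ℤ, (q' = 0 ∨ q' = 1) ∧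
      u < v + (2 - q' - b) * L ∧
      u > v - (1 + q' - b) * L ∧
      u ≤ v + b * L ∧
      u ≥ v - b * L) ↔ (b = 1 ↔ u ≠ v) := by
  constructor
  · rintro ⟨q', hq, h1, h2, h3, h4⟩
    rcases hb with rfl | rfl <;> rcases hq with rfl | rfl <;>
      constructor <;> intro h <;> omega
  · intro h
    rcases hb with rfl | rfl
    · have : u = v := by by_contra hne; exact absurd (h.mpr hne) (by norm_num)
      exact ⟨0, Or.inl rfl, by omega, by omega, by omega, by omega⟩
    · have hne : u ≠ v := h.mp rfl
      rcases lt_or_gt_of_ne hne with hlt | hgt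
      · exact ⟨1, Or.inr rfl, by omega, by omega, by omega, by omega⟩
      · exact ⟨0, Or.inl rfl, by omega, by omega, by omega, by omega⟩
end

section
/- Let F(z_1,…,z_M) be a formula coloring instance (a conjunction of clauses of the forms (z_u ≠ z_v) and ((z_u ≠ z_v) ∨ (z_k = z_l))). If F has a valid coloring using k colors, then the associated integer program ILP_F (with binary variables w_i, x_{u,i} for 1 ≤ u,i ≤ M, variables ẑ_u ∈ {1,…,M}, and the stated constraints) has a feasible assignment whose objective value Σ_i w_i equals k. -/
/-- A formula coloring instance over `M` variables: a conjunction of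
clauses `(z_u ≠ z_v)` (`neqClauses`) and clauses
`((z_u ≠ z_v) ∨ (z_k = z_l))` (`implClauses`, stored as `(u, v, k, l)`). -/
structure FCInstance (M : ℕ) where
  neqClauses : List (Fin M × Fin M)
  implClauses : List (Fin M × Fin M × Fin M × Fin M)

/-- A coloring `c` satisfies the formula coloring instance `F`. -/
def FCInstance.Sat {M : ℕ} (F : FCInstance M) {C : Type*} (c : Fin M → C) : Prop :=
  (∀ p ∈ F.neqClauses, c p.1 ≠ c p.2) ∧
  (∀ p ∈ F.implClauses, c p.1 ≠ c p.2.1 ∨ c p.2.2.1 = c p.2.2.2)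

/-- The number of colors used by a coloring `c`. -/
def colorsUsed {M : ℕ} {C : Type*} [DecidableEq C] (c : Fin M → C) : ℕ :=
  (Finset.image c Finset.univ).card

/-- An assignment of the variables of the integer program `ILP_F` associated with a
formula coloring instance over `M` variables with `R` clauses of the second kind. -/
structure ILPAssign (M R : ℕ) where
  w : Fin M → ℕ
  x : Fin M → Fin M → ℕ
  zhat : Fin M → ℕ
  a : Fin R → ℕ
  b : Fin R → ℕ
  s : Fin R → ℕ

/-- Feasibility of an assignment for the integer program `ILP_F`:
all indicator variables are binary, `1 ≤ ẑ_u ≤ M`, and constraints (1)–(8) hold,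
where color `i : Fin M` stands for the color value `i + 1 ∈ {1, …, M}`. -/
def ILPFeasible {M : ℕ} (F : FCInstance M) (A : ILPAssign M F.implClauses.length) : Prop :=
  (∀ i, A.w i = 0 ∨ A.w i = 1) ∧
  (∀ u i, A.x u i = 0 ∨ A.x u i = 1) ∧
  (∀ j, A.a j = 0 ∨ A.a j = 1) ∧
  (∀ j, A.b j = 0 ∨ A.b j = 1) ∧
  (∀ j, A.s j = 0 ∨ A.s j = 1) ∧
  (∀ u, 1 ≤ A.zhat u ∧ A.zhat u ≤ M) ∧
  -- (1)  x_{u,i} = 1 ⟺ ẑ_u = i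
  (∀ u i, A.x u i = 1 ↔ A.zhat u = (i : ℕ) + 1) ∧
  -- (2)  Σ_i x_{u,i} = 1
  (∀ u, ∑ i, A.x u i = 1) ∧
  -- (3)  x_{u,i} ≤ w_i
  (∀ u i, A.x u i ≤ A.w i) ∧
  -- (4)  for every clause (z_u ≠ z_v) and every i,  x_{u,i} + x_{v,i} ≤ 1
  (∀ p ∈ F.neqClauses, ∀ i, A.x p.1 i + A.x p.2 i ≤ 1) ∧
  -- (5)–(8)  for every clause ((z_u ≠ z_v) ∨ (z_k = z_l))
  (∀ j : Fin F.implClauses.length,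
    (A.a j = 1 ↔ A.zhat (F.implClauses.get j).2.2.1 = A.zhat (F.implClauses.get j).2.2.2) ∧
    (A.b j = 1 ↔ A.zhat (F.implClauses.get j).1 ≠ A.zhat (F.implClauses.get j).2.1) ∧
    A.s j = max (A.a j) (A.b j) ∧
    1 ≤ A.s j)

/-! Since at most `M` colors occur, the coloring can be relabeled injectively into `Fin M`
without changing which clauses hold or how many colors are used. For such a coloring `d`
the 0–1 indicators `x_{u,i} = [d u = i]`, `w_i = [i is a color of d]`, `ẑ_u = d u + 1`
and `a_j`, `b_j` read off the clause satisfy every constraint, and `Σ w_i` counts the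
colors in use. -/

open Finset

section Recoloring

variable {M : ℕ} {C D : Type*}

theorem FCInstance.sat_comp_iff (F : FCInstance M) {g : C → D} (hg : Function.Injective g)
    (c : Fin M → C) : F.Sat (g ∘ c) ↔ F.Sat c := by
  simp only [FCInstance.Sat, Function.comp_apply, hg.ne_iff, hg.eq_iff]

theorem colorsUsed_comp [DecidableEq C] [DecidableEq D] {g : C → D} (hg : Function.Injective g)
    (c : Fin M → C) : colorsUsed (g ∘ c) = colorsUsed c := by
  rw [colorsUsed, ← image_image, card_image_of_injective _ hg, colorsUsed]

theorem exists_recoloring_fin [DecidableEq C] (F : FCInstance M) (c : Fin M → C) (hc : F.Sat c) :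
    ∃ d : Fin M → Fin M, F.Sat d ∧ colorsUsed d = colorsUsed c := by
  classical
  obtain ⟨e⟩ : Nonempty (Set.range c ↪ Fin M) :=
    Function.Embedding.nonempty_of_card_le (by simpa using Fintype.card_range_le c)
  have hval : Subtype.val ∘ Set.rangeFactorization c = c := rfl
  refine ⟨e ∘ Set.rangeFactorization c, ?_, ?_⟩
  · rw [F.sat_comp_iff e.injective, ← F.sat_comp_iff Subtype.val_injective, hval]
    exact hc
  · rw [colorsUsed_comp e.injective, ← colorsUsed_comp Subtype.val_injective, hval]

end Recoloring

namespace ILPAssign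

variable {M : ℕ}

def ofColoring (F : FCInstance M) (d : Fin M → Fin M) : ILPAssign M F.implClauses.length where
  w i := if i ∈ univ.image d then 1 else 0
  x u i := if d u = i then 1 else 0
  zhat u := d u + 1
  a j := if d (F.implClauses.get j).2.2.1 = d (F.implClauses.get j).2.2.2 then 1 else 0
  b j := if d (F.implClauses.get j).1 ≠ d (F.implClauses.get j).2.1 then 1 else 0
  s j := max (if d (F.implClauses.get j).2.2.1 = d (F.implClauses.get j).2.2.2 then 1 else 0)
    (if d (F.implClauses.get j).1 ≠ d (F.implClauses.get j).2.1 then 1 else 0)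

theorem sum_w_ofColoring (F : FCInstance M) (d : Fin M → Fin M) :
    ∑ i, (ofColoring F d).w i = colorsUsed d := by
  simp only [ofColoring, sum_boole, Nat.cast_id, filter_mem_eq_inter, univ_inter, colorsUsed]

theorem ofColoring_feasible {F : FCInstance M} {d : Fin M → Fin M} (hd : F.Sat d) :
    ILPFeasible F (ofColoring F d) := by
  refine ⟨fun i => ?_, fun u i => ?_, fun j => ?_, fun j => ?_, fun j => ?_, fun u => ?_,
    fun u i => ?_, fun u => ?_, fun u i => ?_, fun p hp i => ?_, fun j => ?_⟩
  all_goals simp only [ofColoring, Nat.add_right_cancel_iff, Fin.val_inj]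
  · split <;> simp
  · split <;> simp
  · split <;> simp
  · split <;> simp
  · split <;> split <;> simp
  · exact ⟨Nat.le_add_left _ _, (d u).isLt⟩
  · split <;> simp_all
  · exact sum_ite_eq _ _ _ |>.trans (if_pos (mem_univ _))
  · split
    · next h => subst h; simp
    · exact Nat.zero_le _
  · have hne := hd.1 p hp
    split <;> split <;> simp_all
  · refine ⟨by split <;> simp_all, by split <;> simp_all [Fin.val_inj], trivial, ?_⟩
    rcases hd.2 _ (List.get_mem _ j) with h | h
    · exact le_max_of_le_right (le_of_eq (if_pos h).symm)
    · exact le_max_of_le_left (le_of_eq (if_pos h).symm)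

end ILPAssign

theorem stmt_9 {M : ℕ} (F : FCInstance M) (k : ℕ) (c : Fin M → ℕ)
    (hsat : F.Sat c) (hk : colorsUsed c = k) :
    ∃ A : ILPAssign M F.implClauses.length, ILPFeasible F A ∧ ∑ i, A.w i = k := by
  obtain ⟨d, hd, hused⟩ := exists_recoloring_fin F c hsat
  exact ⟨ILPAssign.ofColoring F d, ILPAssign.ofColoring_feasible hd,
    by rw [ILPAssign.sum_w_ofColoring, hused, hk]⟩
end

section
/- Conversely, if the formula F_S constructed from a labeled sample S (all strings of length k) has a valid coloring using k' colors, then there exists a DFA with at most k' states that is consistent with S. -/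
/-- The state of a DFA with transition function `δ` and start state `q0`
after reading the first `j` bits of the length-`k` string `w`. -/
def stateAt {Q : Type*} (δ : Q → Bool → Q) (q0 : Q) {k : ℕ} (w : Fin k → Bool) : ℕ → Q
  | 0 => q0
  | j + 1 => if h : j < k then δ (stateAt δ q0 w j) (w ⟨j, h⟩) else stateAt δ q0 w j

theorem stateAt_equiv {Q Q' : Type*} (e : Q ≃ Q') (δ : Q → Bool → Q) (q0 : Q)
    {k : ℕ} (w : Fin k → Bool) (j : ℕ) :
    stateAt (fun q b => e (δ (e.symm q) b)) (e q0) w j = e (stateAt δ q0 w j) := by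
  induction j with
  | zero => rfl
  | succ j ih =>
    simp only [stateAt, ih]
    split <;> simp

open Classical in
/-- Transition function on colors. -/
noncomputable def transAux {m k : ℕ} (w : Fin m → Fin k → Bool)
    (c : Fin m → Fin (k + 1) → ℕ) {T : Finset ℕ} (hmem : ∀ i j, c i j ∈ T)
    (q : {x // x ∈ T}) (b : Bool) : {x // x ∈ T} :=
  if h : ∃ p : Fin m × Fin k, c p.1 p.2.castSucc = q.1 ∧ w p.1 p.2 = b then
    ⟨c h.choose.1 h.choose.2.succ, hmem _ _⟩
  else q

theorem transAux_spec {m k : ℕ} (w : Fin m → Fin k → Bool)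
    (c : Fin m → Fin (k + 1) → ℕ) {T : Finset ℕ} (hmem : ∀ i j, c i j ∈ T)
    (himpl : ∀ i₁ i₂ : Fin m, ∀ j₁ j₂ : Fin k, w i₁ j₁ = w i₂ j₂ →
      c i₁ j₁.castSucc = c i₂ j₂.castSucc → c i₁ j₁.succ = c i₂ j₂.succ)
    (i : Fin m) (j : Fin k) (q : {x // x ∈ T}) (hq : c i j.castSucc = q.1) :
    (transAux w c hmem q (w i j)).1 = c i j.succ := by
  have hex : ∃ p : Fin m × Fin k, c p.1 p.2.castSucc = q.1 ∧ w p.1 p.2 = w i j :=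
    ⟨(i, j), hq, rfl⟩
  rw [transAux, dif_pos hex]
  obtain ⟨h1, h2⟩ := hex.choose_spec
  exact himpl hex.choose.1 i hex.choose.2 j h2 (by rw [h1, hq])

open Classical in
/-- Acceptance function on colors. -/
noncomputable def accAux {m k : ℕ} (lab : Fin m → Bool)
    (c : Fin m → Fin (k + 1) → ℕ) {T : Finset ℕ}
    (q : {x // x ∈ T}) : Bool :=
  if h : ∃ i, c i (Fin.last k) = q.1 then lab h.choose else false

theorem accAux_spec {m k : ℕ} (lab : Fin m → Bool)
    (c : Fin m → Fin (k + 1) → ℕ) {T : Finset ℕ}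
    (hneq : ∀ i₁ i₂ : Fin m, lab i₁ ≠ lab i₂ → c i₁ (Fin.last k) ≠ c i₂ (Fin.last k))
    (i : Fin m) (q : {x // x ∈ T}) (hq : c i (Fin.last k) = q.1) :
    accAux lab c q = lab i := by
  have hex : ∃ i', c i' (Fin.last k) = q.1 := ⟨i, hq⟩
  rw [accAux, dif_pos hex]
  by_contra hne
  exact hneq _ i hne (hex.choose_spec.trans hq.symm)

theorem stmt_14 (m k : ℕ) (hm : 0 < m)
    (w : Fin m → Fin k → Bool) (lab : Fin m → Bool)
    -- a coloring of the variables z_i^j of F_S (colors of z_i^j for 0 ≤ j ≤ k)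
    (c : Fin m → Fin (k + 1) → ℕ)
    -- all start variables z_i^0 are identified
    (hstart : ∀ i₁ i₂ : Fin m, c i₁ 0 = c i₂ 0)
    -- the implication clauses of F_S are satisfied
    (himpl : ∀ i₁ i₂ : Fin m, ∀ j₁ j₂ : Fin k, w i₁ j₁ = w i₂ j₂ →
      c i₁ j₁.castSucc = c i₂ j₂.castSucc → c i₁ j₁.succ = c i₂ j₂.succ)
    -- the inequality clauses of F_S are satisfied
    (hneq : ∀ i₁ i₂ : Fin m, lab i₁ ≠ lab i₂ → c i₁ (Fin.last k) ≠ c i₂ (Fin.last k))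
    -- k' = the number of colors used
    (k' : ℕ)
    (hk' : (Finset.image (fun p : Fin m × Fin (k + 1) => c p.1 p.2) Finset.univ).card = k') :
    -- there is a DFA with at most k' states consistent with the sample
    ∃ n : ℕ, n ≤ k' ∧ ∃ (δ : Fin n → Bool → Fin n) (q0 : Fin n) (acc : Fin n → Bool),
      ∀ i : Fin m, acc (stateAt δ q0 (w i) k) = lab i := by
  classical
  set T : Finset ℕ := Finset.image (fun p : Fin m × Fin (k + 1) => c p.1 p.2) Finset.univ with hT
  have hmem : ∀ i j, c i j ∈ T := fun i j =>
    Finset.mem_image.mpr ⟨(i, j), Finset.mem_univ _, rfl⟩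
  refine ⟨T.card, le_of_eq hk', ?_⟩
  set δ' : {x // x ∈ T} → Bool → {x // x ∈ T} := transAux w c hmem with hδ'
  set q0' : {x // x ∈ T} := ⟨c ⟨0, hm⟩ 0, hmem _ _⟩ with hq0'
  have key : ∀ (i : Fin m) (j : ℕ) (hj : j ≤ k),
      (stateAt δ' q0' (w i) j).1 = c i ⟨j, Nat.lt_succ_of_le hj⟩ := by
    intro i j
    induction j with
    | zero => intro _; exact hstart _ i
    | succ j ih =>
      intro hj
      have hjk : j < k := hj
      have ihv := ih (le_of_lt hjk)
      simp only [stateAt, dif_pos hjk]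
      have := transAux_spec w c hmem himpl i ⟨j, hjk⟩ (stateAt δ' q0' (w i) j)
        (by rw [ihv]; rfl)
      rw [hδ']
      exact this
  have hfin : ∀ i : Fin m, (stateAt δ' q0' (w i) k).1 = c i (Fin.last k) := fun i =>
    key i k le_rfl
  refine ⟨fun q b => T.equivFin (δ' (T.equivFin.symm q) b), T.equivFin q0',
    fun q => accAux lab c (T.equivFin.symm q), fun i => ?_⟩
  rw [stateAt_equiv]
  show accAux lab c (T.equivFin.symm (T.equivFin _)) = lab i
  rw [Equiv.symm_apply_apply]
  exact accAux_spec lab c hneq i _ (hfin i).symm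
end
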